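/- arXiv:2605.07808 — 4 statements merged into one kernel-verified Lean document; each statement's English description precedes it below -/
import Mathlib

section
/- Let h > 0 and let p : ℝ → ℝ be a measurable, nonnegative function, integrable on [0,1], with ∫₀¹ p(s) ds > 0. Then for every z in the strip { z ∈ ℂ : |Im(z)| < hπ/2 }, the integral D(z) = ∫₀¹ p(s)·(1/cosh((z−s)/h)) ds has strictly positive real part; in particular D(z) ≠ 0 throughout the strip. -/
/-!
For `w = a + ib` one has `Re cosh w = cosh a cos b` and `|cosh w|² = sinh² a + cos² b ≥ cos² b`,
so on the strip `|b| < π/2` the function `1 / cosh` has positive real part and is bounded by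
`1 / cos b`. Hence `Re D(z) = ∫₀¹ p(s) Re(1 / cosh((z - s)/h)) ds` integrates a nonnegative function
with the same support as `p`, and that support has positive measure because `∫₀¹ p > 0`.
-/

open Real Complex MeasureTheory intervalIntegral

namespace Complex

theorem cosh_re (w : ℂ) : (cosh w).re = Real.cosh w.re * Real.cos w.im := by
  rw [← re_add_im w, cosh_add, cosh_mul_I, sinh_mul_I]
  simp [cos_ofReal_re, cosh_ofReal_re]

theorem cosh_im (w : ℂ) : (cosh w).im = Real.sinh w.re * Real.sin w.im := by
  rw [← re_add_im w, cosh_add, cosh_mul_I, sinh_mul_I]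
  simp [sin_ofReal_re, sinh_ofReal_re]

theorem normSq_cosh (w : ℂ) : normSq (cosh w) = Real.sinh w.re ^ 2 + Real.cos w.im ^ 2 := by
  rw [normSq_apply, cosh_re, cosh_im]
  linear_combination Real.cos w.im ^ 2 * Real.cosh_sq w.re +
    Real.sinh w.re ^ 2 * Real.sin_sq_add_cos_sq w.im

theorem cos_im_le_norm_cosh (w : ℂ) : Real.cos w.im ≤ ‖cosh w‖ := by
  refine (le_abs_self _).trans (abs_le_of_sq_le_sq' ?_ (norm_nonneg _)).2
  rw [sq_abs, Complex.sq_norm, normSq_cosh]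
  exact le_add_of_nonneg_left (sq_nonneg _)

theorem cos_im_pos_of_abs_im_lt {w : ℂ} (hw : |w.im| < π / 2) : 0 < Real.cos w.im :=
  Real.cos_pos_of_mem_Ioo (abs_lt.1 hw)

theorem re_inv_cosh_pos {w : ℂ} (hw : |w.im| < π / 2) : 0 < (cosh w)⁻¹.re := by
  have hcos := cos_im_pos_of_abs_im_lt hw
  rw [inv_re, cosh_re, ← Complex.sq_norm]
  exact div_pos (mul_pos (Real.cosh_pos _) hcos)
    (pow_pos (hcos.trans_le (cos_im_le_norm_cosh w)) 2)

theorem norm_inv_cosh_le {w : ℂ} (hw : |w.im| < π / 2) : ‖(cosh w)⁻¹‖ ≤ (Real.cos w.im)⁻¹ := by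
  rw [norm_inv]
  exact inv_anti₀ (cos_im_pos_of_abs_im_lt hw) (cos_im_le_norm_cosh w)

end Complex

theorem re_integral_ofReal_mul_pos {α : Type*} [MeasurableSpace α] {μ : Measure α}
    {p : α → ℝ} {f : α → ℂ} {C : ℝ} (hp0 : ∀ᵐ x ∂μ, 0 ≤ p x) (hp : 0 < ∫ x, p x ∂μ)
    (hf : AEStronglyMeasurable f μ) (hfC : ∀ᵐ x ∂μ, ‖f x‖ ≤ C) (hf_re : ∀ x, 0 < (f x).re) :
    0 < (∫ x, (p x : ℂ) * f x ∂μ).re := by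
  have hpi : Integrable p μ := .of_integral_ne_zero hp.ne'
  have hpf : Integrable (fun x => (p x : ℂ) * f x) μ := hpi.ofReal.mul_bdd hf hfC
  have hre : ∀ x, ((p x : ℂ) * f x).re = p x * (f x).re := fun x => re_ofReal_mul _ _
  have hsupp : Function.support (fun x => p x * (f x).re) = Function.support p :=
    Function.support_mul_of_ne_zero_right p fun x => (hf_re x).ne'
  rw [← RCLike.re_to_complex, ← integral_re hpf]
  simp only [RCLike.re_to_complex, hre]
  have hpg : Integrable (fun x => p x * (f x).re) μ := by
    simpa only [RCLike.re_to_complex, hre] using hpf.re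
  rw [integral_pos_iff_support_of_nonneg_ae _ hpg, hsupp]
  · exact (integral_pos_iff_support_of_nonneg_ae hp0 hpi).1 hp
  · filter_upwards [hp0] with x hx using mul_nonneg hx (hf_re x).le

theorem sech_integral_re_pos_general
    (h : ℝ) (hh : 0 < h) (p : ℝ → ℝ)
    (hp0 : ∀ s, 0 ≤ p s)
    (hppos : 0 < ∫ s in (0:ℝ)..1, p s) :
    ∀ z : ℂ, |z.im| < h * Real.pi / 2 →
      0 < (∫ s in (0:ℝ)..1,
            ((p s : ℝ) : ℂ) * (Complex.cosh ((z - (s : ℂ)) / (h : ℂ)))⁻¹).re ∧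
      (∫ s in (0:ℝ)..1,
            ((p s : ℝ) : ℂ) * (Complex.cosh ((z - (s : ℂ)) / (h : ℂ)))⁻¹) ≠ 0 := by
  intro z hz
  have him : ∀ s : ℝ, ((z - s) / h).im = z.im / h := fun s => by simp
  have hw : ∀ s : ℝ, |((z - s) / h).im| < π / 2 := fun s => by
    rw [him, abs_div, abs_of_pos hh, div_lt_iff₀ hh]
    linarith
  have hre : 0 < (∫ s in (0:ℝ)..1, (p s : ℂ) * (cosh ((z - s) / h))⁻¹).re := by
    rw [integral_of_le zero_le_one] at hppos ⊢
    refine re_integral_ofReal_mul_pos (C := (Real.cos (z.im / h))⁻¹)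
      (.of_forall fun s => hp0 s) hppos (by fun_prop) (.of_forall fun s => ?_)
      fun s => re_inv_cosh_pos (hw s)
    simpa only [him] using norm_inv_cosh_le (hw s)
  exact ⟨hre, fun h0 => by simp [h0] at hre⟩

/-- Let `h > 0` and let `p : ℝ → ℝ` be measurable, nonnegative, integrable on `[0,1]`,
with `∫₀¹ p > 0`.  Then for every `z` in the strip `{z : |Im z| < hπ/2}`, the integral
`D(z) = ∫₀¹ p(s)·(1/cosh((z−s)/h)) ds` has strictly positive real part; in particular
`D(z) ≠ 0` throughout the strip. -/
theorem sech_integral_re_pos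
    (h : ℝ) (hh : 0 < h) (p : ℝ → ℝ)
    (hp : Measurable p) (hp0 : ∀ s, 0 ≤ p s)
    (hpint : IntegrableOn p (Set.Icc (0:ℝ) 1))
    (hppos : 0 < ∫ s in (0:ℝ)..1, p s) :
    ∀ z : ℂ, |z.im| < h * Real.pi / 2 →
      0 < (∫ s in (0:ℝ)..1,
            ((p s : ℝ) : ℂ) * (Complex.cosh ((z - (s : ℂ)) / (h : ℂ)))⁻¹).re ∧
      (∫ s in (0:ℝ)..1,
            ((p s : ℝ) : ℂ) * (Complex.cosh ((z - (s : ℂ)) / (h : ℂ)))⁻¹) ≠ 0 :=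
  sech_integral_re_pos_general h hh p hp0 hppos
end

section
/- Let (Ω, 𝔉, P) be a probability space, S : Ω → E measurable, Z : Ω → ℝ a random variable with values in {0,1} almost surely satisfying E[Z | σ(S)] = η∘S almost surely, and let f, f* : E → [0,1] be measurable with sup_{s ∈ E} |f*(s) − η(s)| ≤ ε. Then the excess loss h_f = (f∘S − Z)² − (f*∘S − Z)² satisfies |h_f| ≤ 4 almost surely and E[h_f²] ≤ 32·E[h_f] + 64·ε². -/
open MeasureTheory

set_option maxHeartbeats 1000000 in
/-- Bernstein condition for the excess loss: if `Z ∈ {0,1}` a.s.,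
`E[Z | σ(S)] = η ∘ S` a.s., `f, f* : E → [0,1]` are measurable and
`sup_s |f*(s) − η(s)| ≤ ε`, then the excess loss
`h_f = (f∘S − Z)² − (f*∘S − Z)²` satisfies `|h_f| ≤ 4` a.s. and
`E[h_f²] ≤ 32·E[h_f] + 64·ε²`. -/
theorem excess_loss_bernstein_condition
    {Ω E : Type*} [MeasurableSpace Ω] [MeasurableSpace E]
    (μ : Measure Ω) [IsProbabilityMeasure μ]
    (S : Ω → E) (hS : Measurable S)
    (Z : Ω → ℝ) (hZ : Measurable Z) (hZ01 : ∀ᵐ ω ∂μ, Z ω = 0 ∨ Z ω = 1)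
    (η : E → ℝ) (hη : Measurable η)
    (hcond : μ[Z | MeasurableSpace.comap S inferInstance] =ᵐ[μ] fun ω => η (S ω))
    (f fs : E → ℝ) (hf : Measurable f) (hfs : Measurable fs)
    (hf01 : ∀ s, f s ∈ Set.Icc (0:ℝ) 1) (hfs01 : ∀ s, fs s ∈ Set.Icc (0:ℝ) 1)
    (ε : ℝ) (hfsη : ∀ s, |fs s - η s| ≤ ε) :
    (∀ᵐ ω ∂μ, |(f (S ω) - Z ω) ^ 2 - (fs (S ω) - Z ω) ^ 2| ≤ 4) ∧
    ∫ ω, ((f (S ω) - Z ω) ^ 2 - (fs (S ω) - Z ω) ^ 2) ^ 2 ∂μ ≤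
      32 * ∫ ω, ((f (S ω) - Z ω) ^ 2 - (fs (S ω) - Z ω) ^ 2) ∂μ + 64 * ε ^ 2 := by
  have hm : MeasurableSpace.comap S inferInstance ≤ _ := hS.comap_le
  haveI : SigmaFinite (μ.trim hm) := inferInstance
  -- bounds on η
  have hη_bd : ∀ s, |η s| ≤ 1 + ε := by
    intro s
    have h1 := hfsη s
    have h2 := (hfs01 s).1
    have h3 := (hfs01 s).2
    rw [abs_le] at h1 ⊢
    constructor <;> nlinarith [h1.1, h1.2]
  -- a.e. bound on Z
  have hZbd : ∀ᵐ ω ∂μ, ‖Z ω‖ ≤ 1 := by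
    filter_upwards [hZ01] with ω hω
    rcases hω with h | h <;> simp [h]
  -- integrability of bounded measurable functions
  have hIbd : ∀ {g : Ω → ℝ}, Measurable g → ∀ (C : ℝ), (∀ᵐ ω ∂μ, ‖g ω‖ ≤ C) →
      Integrable g μ := by
    intro g hg C hC
    exact (integrable_const C).mono' hg.aestronglyMeasurable hC
  -- shorthand functions
  set F : Ω → ℝ := fun ω => f (S ω) with hF_def
  set G : Ω → ℝ := fun ω => fs (S ω) with hG_def
  set H : Ω → ℝ := fun ω => η (S ω) with hH_def
  have hFm : Measurable F := hf.comp hS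
  have hGm : Measurable G := hfs.comp hS
  have hHm : Measurable H := hη.comp hS
  have hF01 : ∀ ω, 0 ≤ F ω ∧ F ω ≤ 1 := fun ω => hf01 (S ω)
  have hG01 : ∀ ω, 0 ≤ G ω ∧ G ω ≤ 1 := fun ω => hfs01 (S ω)
  have hGH : ∀ ω, -ε ≤ G ω - H ω ∧ G ω - H ω ≤ ε := by
    intro ω
    have := hfsη (S ω)
    rw [abs_le] at this
    exact this
  have hFbd : ∀ ω, ‖F ω‖ ≤ 1 := by
    intro ω
    rw [Real.norm_eq_abs, abs_le]
    exact ⟨by linarith [(hF01 ω).1], (hF01 ω).2⟩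
  have hGbd : ∀ ω, ‖G ω‖ ≤ 1 := by
    intro ω
    rw [Real.norm_eq_abs, abs_le]
    exact ⟨by linarith [(hG01 ω).1], (hG01 ω).2⟩
  have hHbd : ∀ ω, ‖H ω‖ ≤ 1 + ε := fun ω => hη_bd (S ω)
  have hεnn : 0 ≤ ε := by
    have hne : Nonempty Ω := by
      by_contra h
      rw [not_nonempty_iff] at h
      have h1 : μ Set.univ = 1 := measure_univ
      simp [Set.univ_eq_empty_iff.mpr h] at h1
    exact le_trans (abs_nonneg _) (hfsη (S (Classical.choice hne)))
  -- the W function, strongly measurable w.r.t. the comap σ-algebra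
  set W : Ω → ℝ := fun ω => f (S ω) - fs (S ω) with hW_def
  have hWm : Measurable W := hFm.sub hGm
  have hWbd : ∀ ω, ‖W ω‖ ≤ 2 := by
    intro ω
    have h1 := hFbd ω
    have h2 := hGbd ω
    rw [Real.norm_eq_abs] at *
    calc |W ω| ≤ |F ω| + |G ω| := abs_sub _ _
    _ ≤ 2 := by linarith
  have hSm : Measurable[MeasurableSpace.comap S inferInstance] S :=
    Measurable.of_comap_le le_rfl
  have hWsm : StronglyMeasurable[MeasurableSpace.comap S inferInstance] W :=
    ((hf.sub hfs).comp hSm).stronglyMeasurable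
  -- integrability facts
  have hZint : Integrable Z μ := hIbd hZ 1 hZbd
  have hWZmul_bd : ∀ᵐ ω ∂μ, ‖W ω * Z ω‖ ≤ 2 := by
    filter_upwards [hZbd] with ω hω
    calc ‖W ω * Z ω‖ = ‖W ω‖ * ‖Z ω‖ := norm_mul _ _
    _ ≤ 2 * 1 := mul_le_mul (hWbd ω) hω (norm_nonneg _) (by norm_num)
    _ = 2 := by norm_num
  have hWZint : Integrable (W * Z) μ := hIbd (hWm.mul hZ) 2 hWZmul_bd
  have hWZint' : Integrable (fun ω => W ω * Z ω) μ := hWZint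
  -- key identity: ∫ W·Z = ∫ W·H
  have key : ∫ ω, W ω * Z ω ∂μ = ∫ ω, W ω * H ω ∂μ := by
    have h1 : μ[W * Z | MeasurableSpace.comap S inferInstance] =ᵐ[μ]
        W * μ[Z | MeasurableSpace.comap S inferInstance] :=
      condExp_mul_of_stronglyMeasurable_left hWsm hWZint hZint
    have h2 : W * μ[Z | MeasurableSpace.comap S inferInstance] =ᵐ[μ]
        fun ω => W ω * H ω := by
      filter_upwards [hcond] with ω hω
      show W ω * (μ[Z | MeasurableSpace.comap S inferInstance]) ω = W ω * H ω
      rw [hω]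
    calc ∫ ω, W ω * Z ω ∂μ = ∫ ω, (W * Z) ω ∂μ := rfl
    _ = ∫ ω, (μ[W * Z | MeasurableSpace.comap S inferInstance]) ω ∂μ :=
        (integral_condExp hm).symm
    _ = ∫ ω, W ω * H ω ∂μ := integral_congr_ae (h1.trans h2)
  -- more integrability
  have hFH2int : Integrable (fun ω => (F ω - H ω) ^ 2) μ := by
    refine hIbd ((hFm.sub hHm).pow_const 2) ((1 + (1 + ε)) ^ 2) ?_
    filter_upwards with ω
    have h1 := hFbd ω
    have h2 := hHbd ω
    rw [Real.norm_eq_abs, abs_le] at *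
    constructor <;> nlinarith [h1.1, h1.2, h2.1, h2.2]
  have hGH2int : Integrable (fun ω => (G ω - H ω) ^ 2) μ := by
    refine hIbd ((hGm.sub hHm).pow_const 2) ((1 + (1 + ε)) ^ 2) ?_
    filter_upwards with ω
    have h1 := hGbd ω
    have h2 := hHbd ω
    rw [Real.norm_eq_abs, abs_le] at *
    constructor <;> nlinarith [h1.1, h1.2, h2.1, h2.2]
  have hWHint : Integrable (fun ω => W ω * H ω) μ := by
    refine hIbd (hWm.mul hHm) (2 * (1 + ε)) ?_
    filter_upwards with ω
    calc ‖W ω * H ω‖ = ‖W ω‖ * ‖H ω‖ := norm_mul _ _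
    _ ≤ 2 * (1 + ε) :=
      mul_le_mul (hWbd ω) (hHbd ω) (norm_nonneg _) (by norm_num)
  -- the expectation of the excess loss
  have hIh : ∫ ω, ((F ω - Z ω) ^ 2 - (G ω - Z ω) ^ 2) ∂μ =
      (∫ ω, (F ω - H ω) ^ 2 ∂μ) - ∫ ω, (G ω - H ω) ^ 2 ∂μ := by
    have hptwise : ∀ ω, (F ω - Z ω) ^ 2 - (G ω - Z ω) ^ 2 =
        ((F ω - H ω) ^ 2 - (G ω - H ω) ^ 2) + 2 * (W ω * H ω - W ω * Z ω) := by
      intro ω; simp only [hW_def]; ring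
    calc ∫ ω, ((F ω - Z ω) ^ 2 - (G ω - Z ω) ^ 2) ∂μ
        = ∫ ω, (((F ω - H ω) ^ 2 - (G ω - H ω) ^ 2)
            + 2 * (W ω * H ω - W ω * Z ω)) ∂μ :=
          integral_congr_ae (Filter.Eventually.of_forall hptwise)
    _ = (∫ ω, ((F ω - H ω) ^ 2 - (G ω - H ω) ^ 2) ∂μ)
            + ∫ ω, 2 * (W ω * H ω - W ω * Z ω) ∂μ :=
          integral_add (hFH2int.sub hGH2int) ((hWHint.sub hWZint').const_mul 2)
    _ = (∫ ω, (F ω - H ω) ^ 2 ∂μ) - (∫ ω, (G ω - H ω) ^ 2 ∂μ)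
            + 2 * ((∫ ω, W ω * H ω ∂μ) - ∫ ω, W ω * Z ω ∂μ) := by
          rw [integral_sub hFH2int hGH2int, integral_const_mul,
            integral_sub hWHint hWZint']
    _ = (∫ ω, (F ω - H ω) ^ 2 ∂μ) - ∫ ω, (G ω - H ω) ^ 2 ∂μ := by
          rw [key]; ring
  -- bound ∫ (G-H)² ≤ ε²
  have hB : ∫ ω, (G ω - H ω) ^ 2 ∂μ ≤ ε ^ 2 := by
    calc ∫ ω, (G ω - H ω) ^ 2 ∂μ ≤ ∫ _ω, ε ^ 2 ∂μ := by
          refine integral_mono hGH2int (integrable_const _) ?_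
          intro ω
          show (G ω - H ω) ^ 2 ≤ ε ^ 2
          nlinarith [(hGH ω).1, (hGH ω).2]
    _ = ε ^ 2 := by simp
  have hA : 0 ≤ ∫ ω, (F ω - H ω) ^ 2 ∂μ :=
    integral_nonneg fun ω => sq_nonneg _
  -- a.e. bound |h| ≤ 4
  have habs : ∀ᵐ ω ∂μ, |(F ω - Z ω) ^ 2 - (G ω - Z ω) ^ 2| ≤ 4 := by
    filter_upwards [hZ01] with ω hω
    have h1 := hF01 ω
    have h2 := hG01 ω
    rw [abs_le]
    rcases hω with h | h <;> rw [h] <;>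
      constructor <;> nlinarith [h1.1, h1.2, h2.1, h2.2]
  refine ⟨habs, ?_⟩
  -- integrability of h²
  have hh2int : Integrable (fun ω => ((F ω - Z ω) ^ 2 - (G ω - Z ω) ^ 2) ^ 2) μ := by
    refine hIbd ((((hFm.sub hZ).pow_const 2).sub ((hGm.sub hZ).pow_const 2)).pow_const 2)
      16 ?_
    filter_upwards [habs] with ω hω
    rw [abs_le] at hω
    rw [Real.norm_eq_abs, abs_le]
    constructor <;> nlinarith [hω.1, hω.2]
  -- pointwise bound h² ≤ 8(F-H)² + 8(G-H)²
  have hpt : ∀ᵐ ω ∂μ, ((F ω - Z ω) ^ 2 - (G ω - Z ω) ^ 2) ^ 2 ≤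
      8 * (F ω - H ω) ^ 2 + 8 * (G ω - H ω) ^ 2 := by
    filter_upwards [hZ01] with ω hω
    have h1 := hF01 ω
    have h2 := hG01 ω
    have key1 : ((F ω - Z ω) ^ 2 - (G ω - Z ω) ^ 2) ^ 2 ≤ 4 * (F ω - G ω) ^ 2 := by
      rcases hω with h | h
      · have hsum : (F ω + G ω) ^ 2 ≤ 4 := by nlinarith [h1.1, h1.2, h2.1, h2.2]
        calc ((F ω - Z ω) ^ 2 - (G ω - Z ω) ^ 2) ^ 2
            = (F ω - G ω) ^ 2 * (F ω + G ω) ^ 2 := by rw [h]; ring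
        _ ≤ (F ω - G ω) ^ 2 * 4 := mul_le_mul_of_nonneg_left hsum (sq_nonneg _)
        _ = 4 * (F ω - G ω) ^ 2 := by ring
      · have hsum : (F ω + G ω - 2) ^ 2 ≤ 4 := by nlinarith [h1.1, h1.2, h2.1, h2.2]
        calc ((F ω - Z ω) ^ 2 - (G ω - Z ω) ^ 2) ^ 2
            = (F ω - G ω) ^ 2 * (F ω + G ω - 2) ^ 2 := by rw [h]; ring
        _ ≤ (F ω - G ω) ^ 2 * 4 := mul_le_mul_of_nonneg_left hsum (sq_nonneg _)
        _ = 4 * (F ω - G ω) ^ 2 := by ring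
    have key2 : (F ω - G ω) ^ 2 ≤ 2 * (F ω - H ω) ^ 2 + 2 * (G ω - H ω) ^ 2 := by
      nlinarith [sq_nonneg (F ω + G ω - 2 * H ω)]
    linarith
  -- integrate the pointwise bound
  have hmain : ∫ ω, ((F ω - Z ω) ^ 2 - (G ω - Z ω) ^ 2) ^ 2 ∂μ ≤
      8 * (∫ ω, (F ω - H ω) ^ 2 ∂μ) + 8 * ∫ ω, (G ω - H ω) ^ 2 ∂μ := by
    calc ∫ ω, ((F ω - Z ω) ^ 2 - (G ω - Z ω) ^ 2) ^ 2 ∂μ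
        ≤ ∫ ω, (8 * (F ω - H ω) ^ 2 + 8 * (G ω - H ω) ^ 2) ∂μ :=
          integral_mono_ae hh2int ((hFH2int.const_mul 8).add (hGH2int.const_mul 8)) hpt
    _ = 8 * (∫ ω, (F ω - H ω) ^ 2 ∂μ) + 8 * ∫ ω, (G ω - H ω) ^ 2 ∂μ := by
          rw [integral_add (hFH2int.const_mul 8) (hGH2int.const_mul 8),
            integral_const_mul, integral_const_mul]
  -- conclude
  have hεsq : (0:ℝ) ≤ ε ^ 2 := sq_nonneg ε
  calc ∫ ω, ((F ω - Z ω) ^ 2 - (G ω - Z ω) ^ 2) ^ 2 ∂μ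
      ≤ 8 * (∫ ω, (F ω - H ω) ^ 2 ∂μ) + 8 * ∫ ω, (G ω - H ω) ^ 2 ∂μ := hmain
  _ ≤ 32 * ((∫ ω, (F ω - H ω) ^ 2 ∂μ) - ∫ ω, (G ω - H ω) ^ 2 ∂μ) + 64 * ε ^ 2 := by
      linarith
  _ = 32 * (∫ ω, ((F ω - Z ω) ^ 2 - (G ω - Z ω) ^ 2) ∂μ) + 64 * ε ^ 2 := by
      rw [hIh]
end

section
/- Expected uniform deviation bound via a net: under the hypotheses of the previous statement (𝒢 a class of measurable functions 𝒵 → [0,2] with a (1/n)-net of size at most (6n)^{2d}, and Z_1,…,Z_n i.i.d.), setting t* = √((4d·log(6n) + 2·log 2)/n), the supremum U = sup_{g ∈ 𝒢} |(1/n)·Σ_{i=1}^n g(Z_i) − E[g(Z_1)]| satisfies E[U] ≤ 2/n + t* + 1/(n·t*). -/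
/-!
For a single `g`, Hoeffding's lemma makes `g(Zᵢ) - E g` sub-Gaussian with variance proxy `1`, so
the empirical deviation of `g` exceeds `t` with probability at most `2 e^{-n t²/2}`. Replacing `g`
by a net element within `1/n` moves its deviation by at most `2/n`, so a union bound over the net
gives `P(U > 2/n + t) ≤ 2 (6n)^{2d} e^{-n t²/2}`. In the layer-cake formula for `E[U - 2/n]⁺`,
bound this probability by `1` below `t*` and, above `t*`, by the Gaussian tail times `t / t*`,
which integrates to `2 (6n)^{2d} e^{-n t*²/2} / (n t*) = 1 / (n t*)`.
-/

open MeasureTheory ProbabilityTheory Real Set Filter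
open scoped NNReal Topology

noncomputable def empiricalDeviation {Z : Type*} [MeasurableSpace Z] (ν : Measure Z) (n : ℕ)
    (g : Z → ℝ) (ω : Fin n → Z) : ℝ :=
  (1 / (n : ℝ)) * ∑ i : Fin n, g (ω i) - ∫ z, g z ∂ν

lemma ProbabilityTheory.HasSubgaussianMGF.sum_pi {Z ι : Type*} [MeasurableSpace Z]
    {ν : Measure Z} [IsProbabilityMeasure ν] [Fintype ι] {X : Z → ℝ} {c : ℝ≥0}
    (hX : HasSubgaussianMGF X c ν) :
    HasSubgaussianMGF (fun ω : ι → Z => ∑ i, X (ω i)) (Fintype.card ι * c)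
      (Measure.pi fun _ => ν) := by
  have hindep : iIndepFun (fun i (ω : ι → Z) => X (ω i)) (Measure.pi fun _ => ν) :=
    iIndepFun_pi fun _ => hX.aemeasurable
  have hcoord (i : ι) :
      HasSubgaussianMGF (fun ω : ι → Z => X (ω i)) c (Measure.pi fun _ => ν) :=
    .of_map (measurable_pi_apply i).aemeasurable <| by
      rwa [(measurePreserving_eval (fun _ => ν) i).map_eq]
  simpa using HasSubgaussianMGF.sum_of_iIndepFun hindep (s := Finset.univ) fun i _ => hcoord i

section EmpiricalDeviation

variable {Z : Type*} [MeasurableSpace Z] {ν : Measure Z} [IsProbabilityMeasure ν] {n : ℕ}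

lemma measureReal_le_abs_empiricalDeviation_le {f : Z → ℝ} {c : ℝ≥0}
    (hf : HasSubgaussianMGF (fun z => f z - ∫ z, f z ∂ν) c ν) (hn : 0 < n) {t : ℝ}
    (ht : 0 ≤ t) :
    (Measure.pi fun _ : Fin n => ν).real {ω | t ≤ |empiricalDeviation ν n f ω|} ≤
      2 * exp (-n * t ^ 2 / (2 * c)) := by
  set S : (Fin n → Z) → ℝ := fun ω => ∑ i, (f (ω i) - ∫ z, f z ∂ν)
  have hS : HasSubgaussianMGF S (n * c) (Measure.pi fun _ => ν) := by
    simpa only [Fintype.card_fin] using hf.sum_pi (ι := Fin n)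
  have hnt : 0 ≤ (n : ℝ) * t := by positivity
  have hdev (ω : Fin n → Z) : empiricalDeviation ν n f ω = S ω / n := by
    simp only [empiricalDeviation, S, Finset.sum_sub_distrib, Finset.sum_const, Finset.card_univ,
      Fintype.card_fin, nsmul_eq_mul]
    field_simp
  have hexp : exp (-((n : ℝ) * t) ^ 2 / (2 * (n * c))) = exp (-n * t ^ 2 / (2 * c)) := by
    have : (n : ℝ) ≠ 0 := by positivity
    field_simp
  calc (Measure.pi fun _ : Fin n => ν).real {ω | t ≤ |empiricalDeviation ν n f ω|}
      ≤ (Measure.pi fun _ : Fin n => ν).real ({ω | n * t ≤ S ω} ∪ {ω | n * t ≤ (-S) ω}) := by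
        refine measureReal_mono fun ω hω => ?_
        have hω : n * t ≤ |S ω| := by
          rw [← le_div_iff₀' (by positivity), ← Nat.abs_cast, ← abs_div, ← hdev]
          exact hω
        exact le_abs.1 hω
    _ ≤ exp (-((n : ℝ) * t) ^ 2 / (2 * (n * c))) + exp (-((n : ℝ) * t) ^ 2 / (2 * (n * c))) :=
        (measureReal_union_le _ _).trans
          (add_le_add (hS.measure_ge_le hnt) (hS.neg.measure_ge_le hnt))
    _ = 2 * exp (-n * t ^ 2 / (2 * c)) := by rw [hexp]; ring

lemma hasSubgaussianMGF_sub_integral_of_mem_Icc_zero_two {f : Z → ℝ} (hf : Measurable f)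
    (hf2 : ∀ z, f z ∈ Icc (0 : ℝ) 2) :
    HasSubgaussianMGF (fun z => f z - ∫ z, f z ∂ν) 1 ν := by
  have h := hasSubgaussianMGF_of_mem_Icc (μ := ν) hf.aemeasurable (ae_of_all _ hf2)
  have hc : (‖(2 : ℝ) - 0‖₊ / 2) ^ 2 = 1 := by
    rw [sub_zero, ← NNReal.coe_inj]
    norm_num
  rwa [hc] at h

lemma abs_empiricalDeviation_le {g : Z → ℝ} (hg : Measurable g) {a b : ℝ}
    (hgab : ∀ z, g z ∈ Icc a b) (hn : 0 < n) (ω : Fin n → Z) :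
    |empiricalDeviation ν n g ω| ≤ b - a := by
  have hint : ∫ z, g z ∂ν ∈ Icc a b := by
    have hg_int := Integrable.of_mem_Icc a b hg.aemeasurable (ae_of_all ν hgab)
    constructor
    · simpa using integral_mono (integrable_const a) hg_int fun z => (hgab z).1
    · simpa using integral_mono hg_int (integrable_const b) fun z => (hgab z).2
  have hmean : (1 / (n : ℝ)) * ∑ i, g (ω i) ∈ Icc a b := by
    have hn' : (0 : ℝ) < n := by positivity
    constructor
    · rw [one_div_mul_eq_div, le_div_iff₀ hn']
      simpa [mul_comm] using Finset.card_nsmul_le_sum Finset.univ (fun i => g (ω i)) a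
        fun i _ => (hgab (ω i)).1
    · rw [one_div_mul_eq_div, div_le_iff₀ hn']
      simpa [mul_comm] using Finset.sum_le_card_nsmul Finset.univ (fun i => g (ω i)) b
        fun i _ => (hgab (ω i)).2
  exact abs_sub_le_iff.2 ⟨by linarith [hmean.2, hint.1], by linarith [hmean.1, hint.2]⟩

lemma abs_empiricalDeviation_le_add {g g' : Z → ℝ} (hg : Integrable g ν) (hg' : Integrable g' ν)
    {ε : ℝ} (hgg' : ∀ z, |g z - g' z| ≤ ε) (hn : 0 < n) (ω : Fin n → Z) :
    |empiricalDeviation ν n g ω| ≤ |empiricalDeviation ν n g' ω| + 2 * ε := by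
  have hmean : |(1 / (n : ℝ)) * ∑ i, g (ω i) - (1 / (n : ℝ)) * ∑ i, g' (ω i)| ≤ ε := by
    rw [← mul_sub, ← Finset.sum_sub_distrib, abs_mul, abs_of_pos (by positivity)]
    calc 1 / (n : ℝ) * |∑ i, (g (ω i) - g' (ω i))| ≤ 1 / n * ∑ _i : Fin n, ε := by
          gcongr
          exact (Finset.abs_sum_le_sum_abs _ _).trans (Finset.sum_le_sum fun i _ => hgg' (ω i))
      _ = ε := by
          simp only [Finset.sum_const, Finset.card_univ, Fintype.card_fin, nsmul_eq_mul]
          field_simp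
  have hint : |∫ z, g z ∂ν - ∫ z, g' z ∂ν| ≤ ε := by
    rw [← integral_sub hg hg']
    simpa using
      norm_integral_le_of_norm_le_const (μ := ν) (f := fun z => g z - g' z) (ae_of_all _ hgg')
  obtain ⟨hmean₁, hmean₂⟩ := abs_le.1 hmean
  obtain ⟨hint₁, hint₂⟩ := abs_le.1 hint
  have h₁ := le_abs_self (empiricalDeviation ν n g' ω)
  have h₂ := neg_abs_le (empiricalDeviation ν n g' ω)
  unfold empiricalDeviation at *
  rw [abs_le]
  constructor <;> linarith

lemma measureReal_lt_iSup_abs_empiricalDeviation_le {G N : Set (Z → ℝ)}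
    (hG : ∀ g ∈ G, Measurable g ∧ ∀ z, g z ∈ Icc (0 : ℝ) 2) (hNG : N ⊆ G) (hNfin : N.Finite)
    {ε : ℝ} (hε : 0 ≤ ε) (hNnet : ∀ g ∈ G, ∃ g' ∈ N, ∀ z, |g z - g' z| ≤ ε) (hn : 0 < n)
    {t : ℝ} (ht : 0 ≤ t) :
    (Measure.pi fun _ : Fin n => ν).real
        {ω | 2 * ε + t < ⨆ g : G, |empiricalDeviation ν n g ω|} ≤
      N.ncard * (2 * exp (-n * t ^ 2 / 2)) := by
  have hint (g) (hg : g ∈ G) : Integrable g ν :=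
    Integrable.of_mem_Icc 0 2 (hG g hg).1.aemeasurable (ae_of_all _ (hG g hg).2)
  have hcover : {ω | 2 * ε + t < ⨆ g : G, |empiricalDeviation ν n g ω|} ⊆
      ⋃ g' ∈ hNfin.toFinset, {ω | t ≤ |empiricalDeviation ν n g' ω|} := by
    intro ω hω
    obtain ⟨⟨g, hg⟩, hgω⟩ : ∃ g : G, 2 * ε + t < |empiricalDeviation ν n g ω| := by
      by_contra! h
      exact (Real.iSup_le h (by positivity)).not_gt hω
    obtain ⟨g', hg'N, hgg'⟩ := hNnet g hg
    have := abs_empiricalDeviation_le_add (hint g hg) (hint g' (hNG hg'N)) hgg' hn ω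
    exact mem_biUnion (hNfin.mem_toFinset.2 hg'N)
      (show t ≤ |empiricalDeviation ν n g' ω| by linarith)
  calc _ ≤ ∑ g' ∈ hNfin.toFinset, (Measure.pi fun _ : Fin n => ν).real
          {ω | t ≤ |empiricalDeviation ν n g' ω|} :=
        (measureReal_mono hcover (measure_ne_top _ _)).trans (measureReal_biUnion_finset_le _ _)
    _ ≤ ∑ _g' ∈ hNfin.toFinset, 2 * exp (-n * t ^ 2 / 2) := by
        refine Finset.sum_le_sum fun g' hg' => ?_
        obtain ⟨hmeas, hrange⟩ := hG g' (hNG (hNfin.mem_toFinset.1 hg'))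
        simpa using measureReal_le_abs_empiricalDeviation_le
          (hasSubgaussianMGF_sub_integral_of_mem_Icc_zero_two hmeas hrange) hn ht
    _ = N.ncard * (2 * exp (-n * t ^ 2 / 2)) := by
        rw [Finset.sum_const, nsmul_eq_mul, Set.ncard_eq_toFinset_card N hNfin]

end EmpiricalDeviation

lemma hasDerivAt_neg_exp_neg_mul_sq_div {s : ℝ} (hs : s ≠ 0) (t : ℝ) :
    HasDerivAt (fun t => -exp (-s * t ^ 2 / 2) / s) (t * exp (-s * t ^ 2 / 2)) t := by
  refine ((((hasDerivAt_pow 2 t).const_mul (-s)).div_const 2).exp.neg.div_const s).congr_deriv ?_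
  field_simp
  ring

lemma tendsto_neg_exp_neg_mul_sq_div {s : ℝ} (hs : 0 < s) :
    Tendsto (fun t => -exp (-s * t ^ 2 / 2) / s) atTop (𝓝 0) := by
  have h : Tendsto (fun t : ℝ => -s * t ^ 2 / 2) atTop atBot :=
    ((tendsto_pow_atTop two_ne_zero).const_mul_atTop_of_neg (neg_lt_zero.2 hs)).atBot_div_const
      two_pos
  simpa using (tendsto_exp_atBot.comp h).neg.div_const s

lemma integrableOn_Ioi_mul_exp_neg_mul_sq {s a : ℝ} (hs : 0 < s) (ha : 0 ≤ a) :
    IntegrableOn (fun t => t * exp (-s * t ^ 2 / 2)) (Ioi a) :=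
  integrableOn_Ioi_deriv_of_nonneg' (fun t _ => hasDerivAt_neg_exp_neg_mul_sq_div hs.ne' t)
    (fun _ ht => mul_nonneg (ha.trans (le_of_lt ht)) (exp_pos _).le)
    (tendsto_neg_exp_neg_mul_sq_div hs)

lemma integral_Ioi_mul_exp_neg_mul_sq {s a : ℝ} (hs : 0 < s) (ha : 0 ≤ a) :
    ∫ t in Ioi a, t * exp (-s * t ^ 2 / 2) = exp (-s * a ^ 2 / 2) / s := by
  rw [integral_Ioi_of_hasDerivAt_of_tendsto'
    (fun t _ => hasDerivAt_neg_exp_neg_mul_sq_div hs.ne' t)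
    (integrableOn_Ioi_mul_exp_neg_mul_sq hs ha) (tendsto_neg_exp_neg_mul_sq_div hs)]
  ring

section TailIntegral

variable {Ω : Type*} [MeasurableSpace Ω] {μ : Measure Ω} [IsProbabilityMeasure μ]

lemma integral_le_of_measureReal_lt_le {W : Ω → ℝ} (hW : Integrable W μ) (hW0 : 0 ≤ W)
    {s a C : ℝ} (hs : 0 < s) (ha : 0 < a)
    (htail : ∀ t > a, μ.real {ω | t < W ω} ≤ C * exp (-s * t ^ 2 / 2)) :
    ∫ ω, W ω ∂μ ≤ a + C * exp (-s * a ^ 2 / 2) / (s * a) := by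
  set F : ℝ → ℝ := fun t => μ.real {ω | t < W ω}
  have hF_meas : Measurable F := Measurable.ennreal_toReal <|
    Antitone.measurable fun _ _ hst => measure_mono fun _ h => lt_of_le_of_lt hst h
  have hC : 0 ≤ C := by
    have h := (measureReal_nonneg).trans (htail (a + 1) (by linarith))
    exact nonneg_of_mul_nonneg_left h (exp_pos _)
  -- `t / a ≥ 1` on `Ioi a` turns the tail bound into one with a closed-form integral
  have hdom : ∀ t ∈ Ioi a, F t ≤ C / a * (t * exp (-s * t ^ 2 / 2)) := fun t ht => by
    refine (htail t ht).trans ?_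
    rw [div_mul_eq_mul_div, le_div_iff₀ ha]
    nlinarith [mul_nonneg (mul_nonneg hC (exp_pos (-s * t ^ 2 / 2)).le) (sub_nonneg.2 ht.le)]
  have hg_int := (integrableOn_Ioi_mul_exp_neg_mul_sq hs ha.le).const_mul (C / a)
  have hF_int_Ioc : IntegrableOn F (Ioc 0 a) :=
    Measure.integrableOn_of_bounded measure_Ioc_lt_top.ne hF_meas.aestronglyMeasurable
      (ae_of_all _ fun t => by simpa [F, abs_of_nonneg measureReal_nonneg] using measureReal_le_one)
  have hF_int_Ioi : IntegrableOn F (Ioi a) := by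
    refine hg_int.mono' hF_meas.aestronglyMeasurable.restrict ?_
    filter_upwards [self_mem_ae_restrict measurableSet_Ioi] with t ht
    rw [norm_of_nonneg measureReal_nonneg]
    exact hdom t ht
  calc ∫ ω, W ω ∂μ = (∫ t in Ioc 0 a, F t) + ∫ t in Ioi a, F t := by
        rw [hW.integral_eq_integral_meas_lt (ae_of_all _ hW0), ← Ioc_union_Ioi_eq_Ioi ha.le,
          setIntegral_union (Ioc_disjoint_Ioi le_rfl) measurableSet_Ioi hF_int_Ioc hF_int_Ioi]
    _ ≤ (∫ _ in Ioc 0 a, (1 : ℝ)) + ∫ t in Ioi a, C / a * (t * exp (-s * t ^ 2 / 2)) := by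
        refine add_le_add ?_ (setIntegral_mono_on hF_int_Ioi hg_int measurableSet_Ioi hdom)
        exact setIntegral_mono_on hF_int_Ioc (integrableOn_const measure_Ioc_lt_top.ne)
          measurableSet_Ioc fun t _ => measureReal_le_one
    _ = a + C * exp (-s * a ^ 2 / 2) / (s * a) := by
        rw [integral_const_mul, integral_Ioi_mul_exp_neg_mul_sq hs ha.le]
        simp only [integral_const, MeasurableSet.univ, measureReal_restrict_apply, univ_inter,
          volume_real_Ioc, sub_zero, ha.le, sup_of_le_left, smul_eq_mul, mul_one]
        field_simp

lemma integral_le_of_measureReal_add_lt_le {U : Ω → ℝ} (hU : Integrable U μ)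
    {s a b C : ℝ} (hs : 0 < s) (ha : 0 < a)
    (htail : ∀ t > a, μ.real {ω | b + t < U ω} ≤ C * exp (-s * t ^ 2 / 2)) :
    ∫ ω, U ω ∂μ ≤ b + a + C * exp (-s * a ^ 2 / 2) / (s * a) := by
  set W : Ω → ℝ := fun ω => max (U ω - b) 0
  have hW : Integrable W μ := (hU.sub (integrable_const b)).pos_part
  have hW_tail : ∀ t > a, μ.real {ω | t < W ω} ≤ C * exp (-s * t ^ 2 / 2) := fun t ht => by
    convert htail t ht using 4 with ω
    simp only [W, lt_max_iff, (ha.trans ht).not_gt, or_false]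
    constructor <;> intro h <;> linarith
  calc ∫ ω, U ω ∂μ ≤ ∫ ω, (b + W ω) ∂μ :=
        integral_mono hU ((integrable_const b).add hW) fun ω => by
          have := le_max_left (U ω - b) 0
          simp only [W]
          linarith
    _ = b + ∫ ω, W ω ∂μ := by simp [integral_add (integrable_const b) hW]
    _ ≤ b + (a + C * exp (-s * a ^ 2 / 2) / (s * a)) := by
        gcongr
        exact integral_le_of_measureReal_lt_le hW (fun ω => le_max_right _ _) hs ha hW_tail
    _ = b + a + C * exp (-s * a ^ 2 / 2) / (s * a) := by ring

end TailIntegral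

/-- The `t*` of the statement: the level at which the union bound `2 (6n)^{2d} e^{-n t²/2}`
equals `1`. -/
noncomputable def deviationThreshold (n d : ℕ) : ℝ :=
  √((4 * d * log (6 * n) + 2 * log 2) / n)

section DeviationThreshold

variable {n : ℕ} (d : ℕ)

lemma deviationThreshold_pos (hn : 0 < n) : 0 < deviationThreshold n d := by
  have h6n : 1 < (6 * n : ℝ) := by
    have : (1 : ℝ) ≤ n := by exact_mod_cast hn
    linarith
  have := log_pos h6n
  have := log_pos one_lt_two
  unfold deviationThreshold
  positivity

lemma two_mul_pow_mul_exp_deviationThreshold (hn : 0 < n) :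
    2 * (6 * n : ℝ) ^ (2 * d) * exp (-n * deviationThreshold n d ^ 2 / 2) = 1 := by
  have hsq : deviationThreshold n d ^ 2 = (4 * d * log (6 * n) + 2 * log 2) / n :=
    sq_sqrt (Real.sqrt_pos.1 (deviationThreshold_pos d hn)).le
  have harg : -n * deviationThreshold n d ^ 2 / 2 =
      -(((2 * d : ℕ) : ℝ) * log (6 * n) + log 2) := by
    rw [hsq]
    push_cast
    field_simp
    ring
  rw [harg, exp_neg, exp_add, exp_nat_mul, exp_log (by positivity), exp_log two_pos]
  field_simp

end DeviationThreshold

/-- Expected uniform deviation bound via a net: if `G` is a class of measurable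
functions `𝒵 → [0,2]` admitting a `(1/n)`-net `N ⊆ G` in sup norm with
`|N| ≤ (6n)^{2d}`, and `Z₁,…,Zₙ` are i.i.d., then with
`t* = √((4d·log(6n) + 2·log 2)/n)`, the uniform deviation
`U = sup_{g ∈ G} |(1/n)·Σᵢ g(Zᵢ) − E g|` satisfies
`E[U] ≤ 2/n + t* + 1/(n·t*)`. -/
theorem uniform_deviation_expectation
    {Z : Type*} [MeasurableSpace Z]
    (ν : Measure Z) [IsProbabilityMeasure ν]
    (G : Set (Z → ℝ)) (hG : ∀ g ∈ G, Measurable g ∧ ∀ z, g z ∈ Set.Icc (0:ℝ) 2)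
    (n : ℕ) (hn : 1 ≤ n) (d : ℕ)
    (N : Set (Z → ℝ)) (hNG : N ⊆ G) (hNfin : N.Finite)
    (hNcard : (N.ncard : ℝ) ≤ (6 * (n : ℝ)) ^ (2 * d))
    (hNnet : ∀ g ∈ G, ∃ g' ∈ N, ∀ z, |g z - g' z| ≤ 1 / n)
    (U : (Fin n → Z) → ℝ)
    (hU : ∀ ω, U ω = ⨆ g : G, |(1 / (n : ℝ)) * ∑ i : Fin n, (g : Z → ℝ) (ω i) -
      ∫ z, (g : Z → ℝ) z ∂ν|)
    (hUmeas : Measurable U) :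
    ∫ ω, U ω ∂(Measure.pi fun _ : Fin n => ν) ≤
      2 / n + Real.sqrt ((4 * d * Real.log (6 * n) + 2 * Real.log 2) / n) +
        1 / (n * Real.sqrt ((4 * d * Real.log (6 * n) + 2 * Real.log 2) / n)) := by
  obtain rfl : U = fun ω => ⨆ g : G, |empiricalDeviation ν n g ω| := funext hU
  have hU_mem (ω : Fin n → Z) : (⨆ g : G, |empiricalDeviation ν n g ω|) ∈ Icc (0 : ℝ) 2 :=
    ⟨Real.iSup_nonneg fun _ => abs_nonneg _, Real.iSup_le (fun g => by
      simpa using abs_empiricalDeviation_le (ν := ν) (hG g g.2).1 (hG g g.2).2 hn ω) zero_le_two⟩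
  have hU_int := Integrable.of_mem_Icc 0 2 hUmeas.aemeasurable
    (ae_of_all (Measure.pi fun _ : Fin n => ν) hU_mem)
  have htail : ∀ t > deviationThreshold n d, (Measure.pi fun _ : Fin n => ν).real
      {ω | 2 / n + t < ⨆ g : G, |empiricalDeviation ν n g ω|} ≤
        2 * (6 * n : ℝ) ^ (2 * d) * exp (-n * t ^ 2 / 2) := fun t ht => by
    rw [← mul_one_div]
    refine (measureReal_lt_iSup_abs_empiricalDeviation_le hG hNG hNfin (by positivity) hNnet hn
      ((deviationThreshold_pos d hn).trans ht).le).trans ?_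
    rw [← mul_assoc, mul_comm _ (2 : ℝ)]
    gcongr
  calc _ ≤ 2 / n + deviationThreshold n d + 2 * (6 * n : ℝ) ^ (2 * d) *
          exp (-n * deviationThreshold n d ^ 2 / 2) / (n * deviationThreshold n d) :=
        integral_le_of_measureReal_add_lt_le hU_int (by positivity) (deviationThreshold_pos d hn)
          htail
    _ = _ := by rw [two_mul_pow_mul_exp_deviationThreshold d hn]; rfl
end

section
/- Gap in the two-point family: fix h > 0, let m̃ be a random variable on [0,1] with density proportional to t ↦ sech((t−1)/h), let σ̃² be an independent random variable on [0,1/4] with density proportional to t ↦ sech(t/h), and set W = m̃² + σ̃². Define Φ(p) = E[|p − m̃|] + E[|p² − W|] for p ∈ [0,1]. Then for p₀ = 1/16 and any ε with 0 < ε ≤ 1/16, writing p₁ = p₀ + ε, one has Φ(p₀) − Φ(p₁) ≥ (9/16)·ε ≥ ε/2. -/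
open MeasureTheory ProbabilityTheory Set

/-! Split `Φ = φ + ψ` with `φ p = E|p - m̃|` and `ψ p = E|p² - W|`. Moving `p` from `p₀` up to
`p₁ = p₀ + ε` lowers `φ` by at least `ε (1 - 2 P(m̃ < p₁))`. The density of `m̃` increases on
`[0, 1]`, so its distribution function is dominated by the uniform one and `P(m̃ < p₁) ≤ 1/8`.
Since `p ↦ E|p - X|` is `1`-Lipschitz for every `X`, `ψ` rises by at most
`p₁² - p₀² ≤ 3ε/16`. Altogether `Φ` drops by at least `3ε/4 - 3ε/16 = 9ε/16`. -/

section AbsDeviation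

variable {Ω : Type*} [MeasurableSpace Ω] {μ : Measure Ω} {X : Ω → ℝ}

lemma integrable_abs_const_sub_iff [IsFiniteMeasure μ] (hX : AEStronglyMeasurable X μ) (a : ℝ) :
    Integrable (fun ω => |a - X ω|) μ ↔ Integrable X μ := by
  simp_rw [← Real.norm_eq_abs]
  rw [integrable_norm_iff (f := fun ω => a - X ω) (aestronglyMeasurable_const.sub hX)]
  refine ⟨fun h => ?_, (integrable_const a).sub⟩
  simpa only [Pi.sub_def, sub_sub_cancel] using (integrable_const a).sub h

lemma integral_abs_sub_sub_integral_abs_sub_le [IsProbabilityMeasure μ]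
    (hX : AEStronglyMeasurable X μ) (a b : ℝ) :
    ∫ ω, |a - X ω| ∂μ - ∫ ω, |b - X ω| ∂μ ≤ |a - b| := by
  by_cases hXi : Integrable X μ
  · have ha := (integrable_abs_const_sub_iff hX a).2 hXi
    have hb := (integrable_abs_const_sub_iff hX b).2 hXi
    rw [← integral_sub ha hb]
    calc ∫ ω, |a - X ω| - |b - X ω| ∂μ ≤ ∫ _, |a - b| ∂μ :=
          integral_mono (ha.sub hb) (integrable_const _) fun ω => by
            simpa using abs_sub_abs_le_abs_sub (a - X ω) (b - X ω)
      _ = |a - b| := by simp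
  · rw [integral_undef (mt (integrable_abs_const_sub_iff hX a).1 hXi),
      integral_undef (mt (integrable_abs_const_sub_iff hX b).1 hXi), sub_self]
    exact abs_nonneg _

lemma le_integral_abs_sub_sub_integral_abs_sub [IsProbabilityMeasure μ]
    (hX : Measurable X) (hXi : Integrable X μ) {p q : ℝ} (hpq : p ≤ q) :
    (q - p) * (1 - 2 * μ.real {ω | X ω < q}) ≤
      ∫ ω, |p - X ω| ∂μ - ∫ ω, |q - X ω| ∂μ := by
  have hS : MeasurableSet {ω | X ω < q} := hX measurableSet_Iio
  have hp := (integrable_abs_const_sub_iff hX.aestronglyMeasurable p).2 hXi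
  have hq := (integrable_abs_const_sub_iff hX.aestronglyMeasurable q).2 hXi
  have hind : Integrable ({ω | X ω < q}.indicator fun _ => 2 * (q - p)) μ :=
    (integrable_const _).indicator hS
  have hpt : ∀ ω, (q - p) - {ω | X ω < q}.indicator (fun _ => 2 * (q - p)) ω ≤
      |p - X ω| - |q - X ω| := by
    intro ω
    by_cases hω : X ω < q
    · rw [indicator_of_mem (show ω ∈ {ω | X ω < q} from hω)]
      have := abs_sub_abs_le_abs_sub (q - X ω) (p - X ω)
      rw [sub_sub_sub_cancel_right, abs_of_nonneg (sub_nonneg.2 hpq)] at this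
      linarith
    · rw [indicator_of_notMem (show ω ∉ {ω | X ω < q} from hω), abs_of_nonpos (by linarith),
        abs_of_nonpos (by linarith)]
      linarith
  have hint := integral_mono ((integrable_const _).sub hind) (hp.sub hq) hpt
  simp only [Pi.sub_apply] at hint
  rw [integral_sub (integrable_const _) hind, integral_sub hp hq,
    integral_indicator_const _ hS] at hint
  simp only [integral_const, probReal_univ, smul_eq_mul] at hint
  linarith

end AbsDeviation

noncomputable def normalizedDensityMeasure (ρ : ℝ → ℝ) (s : Set ℝ) : Measure ℝ :=
  (ENNReal.ofReal (∫ t in s, ρ t))⁻¹ • (volume.restrict s).withDensity fun t => ENNReal.ofReal (ρ t)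

lemma ae_mem_of_map_eq_normalizedDensityMeasure {Ω : Type*} [MeasurableSpace Ω] {μ : Measure Ω}
    {X : Ω → ℝ} (hX : AEMeasurable X μ) {ρ : ℝ → ℝ} {s : Set ℝ} (hs : MeasurableSet s)
    (hlaw : μ.map X = normalizedDensityMeasure ρ s) : ∀ᵐ ω ∂μ, X ω ∈ s := by
  refine ae_of_ae_map hX ?_
  rw [hlaw]
  exact (Measure.smul_absolutelyContinuous.trans (withDensity_absolutelyContinuous _ _)).ae_le
    (ae_restrict_mem hs)

lemma intervalIntegral_le_mul_of_monotoneOn {ρ : ℝ → ℝ} (hρ : MonotoneOn ρ (Icc 0 1)) {t : ℝ}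
    (ht0 : 0 ≤ t) (ht1 : t ≤ 1) : ∫ x in 0..t, ρ x ≤ t * ∫ x in 0..1, ρ x := by
  have hint : ∀ a ∈ Icc (0 : ℝ) 1, ∀ b ∈ Icc (0 : ℝ) 1, IntervalIntegrable ρ volume a b :=
    fun a ha b hb => (hρ.mono (uIcc_subset_Icc ha hb)).intervalIntegrable
  have hbelow : ∫ x in 0..t, ρ x ≤ t * ρ t := by
    simpa using intervalIntegral.integral_mono_on ht0 (hint 0 (by simp) t ⟨ht0, ht1⟩)
      intervalIntegrable_const fun x hx => hρ ⟨hx.1, hx.2.trans ht1⟩ ⟨ht0, ht1⟩ hx.2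
  have habove : (1 - t) * ρ t ≤ ∫ x in t..1, ρ x := by
    simpa using intervalIntegral.integral_mono_on ht1 intervalIntegrable_const
      (hint t ⟨ht0, ht1⟩ 1 (by simp)) fun x hx => hρ ⟨ht0, ht1⟩ ⟨ht0.trans hx.1, hx.2⟩ hx.1
  rw [← intervalIntegral.integral_add_adjacent_intervals (hint 0 (by simp) t ⟨ht0, ht1⟩)
    (hint t ⟨ht0, ht1⟩ 1 (by simp))]
  nlinarith [mul_le_mul_of_nonneg_left hbelow (sub_nonneg.2 ht1),
    mul_le_mul_of_nonneg_left habove ht0]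

lemma normalizedDensityMeasure_Iic_le_of_monotoneOn {ρ : ℝ → ℝ} (hρ : MonotoneOn ρ (Icc 0 1))
    (hρ0 : 0 ≤ ρ 0) {t : ℝ} (ht0 : 0 ≤ t) (ht1 : t ≤ 1) :
    normalizedDensityMeasure ρ (Icc 0 1) (Iic t) ≤ ENNReal.ofReal t := by
  have hlintegral : ∀ u ∈ Icc (0 : ℝ) 1,
      ∫⁻ x in Icc 0 u, ENNReal.ofReal (ρ x) = ENNReal.ofReal (∫ x in 0..u, ρ x) := by
    intro u hu
    have hsub : Icc 0 u ⊆ Icc (0 : ℝ) 1 := Icc_subset_Icc_right hu.2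
    rw [intervalIntegral.integral_of_le hu.1, ← integral_Icc_eq_integral_Ioc,
      ofReal_integral_eq_lintegral_ofReal
        ((hρ.mono hsub).integrableOn_isCompact isCompact_Icc)
        ((ae_restrict_mem measurableSet_Icc).mono fun x hx =>
          hρ0.trans (hρ (by simp) (hsub hx) hx.1))]
  have hIic : Iic t ∩ Icc 0 1 = Icc 0 t := by
    ext x
    simp only [mem_inter_iff, mem_Iic, mem_Icc]
    exact ⟨fun ⟨hxt, hx0, _⟩ => ⟨hx0, hxt⟩, fun ⟨hx0, hxt⟩ => ⟨hxt, hx0, hxt.trans ht1⟩⟩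
  rw [normalizedDensityMeasure, Measure.smul_apply, withDensity_apply _ measurableSet_Iic,
    Measure.restrict_restrict measurableSet_Iic, hIic, smul_eq_mul, hlintegral t ⟨ht0, ht1⟩,
    integral_Icc_eq_integral_Ioc, ← intervalIntegral.integral_of_le zero_le_one]
  set c := ENNReal.ofReal (∫ x in 0..1, ρ x)
  calc c⁻¹ * ENNReal.ofReal (∫ x in 0..t, ρ x) ≤ c⁻¹ * (ENNReal.ofReal t * c) := by
        rw [← ENNReal.ofReal_mul ht0]
        gcongr
        exact intervalIntegral_le_mul_of_monotoneOn hρ ht0 ht1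
    _ = ENNReal.ofReal t * (c⁻¹ * c) := by ring
    _ ≤ ENNReal.ofReal t := mul_le_of_le_one_right' (ENNReal.inv_mul_le_one c)

lemma monotoneOn_inv_cosh_sub_one_div (h : ℝ) :
    MonotoneOn (fun t => (Real.cosh ((t - 1) / h))⁻¹) (Iic 1) := by
  intro s hs t ht hst
  apply inv_anti₀ (Real.cosh_pos _)
  rw [Real.cosh_le_cosh, abs_div, abs_div, abs_of_nonpos (sub_nonpos.2 ht),
    abs_of_nonpos (sub_nonpos.2 hs)]
  gcongr

theorem two_point_gap_general
    {Ω : Type*} [MeasurableSpace Ω] (μ : Measure Ω) [IsProbabilityMeasure μ]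
    (h : ℝ)
    (mt sg : Ω → ℝ) (hmt : Measurable mt) (hsg : Measurable sg)
    (hlaw1 : Measure.map mt μ =
      (ENNReal.ofReal (∫ t in Set.Icc (0:ℝ) 1, (Real.cosh ((t - 1) / h))⁻¹))⁻¹ •
        ((volume.restrict (Set.Icc (0:ℝ) 1)).withDensity
          fun t => ENNReal.ofReal ((Real.cosh ((t - 1) / h))⁻¹)))
    (ε : ℝ) (hε0 : 0 < ε) (hε : ε ≤ 1/16) :
    (9/16) * ε ≤
      ((∫ ω, |(1/16 : ℝ) - mt ω| ∂μ) +
        ∫ ω, |((1/16 : ℝ)) ^ 2 - (mt ω ^ 2 + sg ω)| ∂μ) -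
      ((∫ ω, |(1/16 + ε) - mt ω| ∂μ) +
        ∫ ω, |(1/16 + ε) ^ 2 - (mt ω ^ 2 + sg ω)| ∂μ) ∧
    ε / 2 ≤ (9/16) * ε := by
  refine ⟨?_, by linarith⟩
  have hlaw : μ.map mt =
      normalizedDensityMeasure (fun t => (Real.cosh ((t - 1) / h))⁻¹) (Icc 0 1) := hlaw1
  have hmt_int : Integrable mt μ :=
    .of_bound hmt.aestronglyMeasurable 1 <|
      (ae_mem_of_map_eq_normalizedDensityMeasure hmt.aemeasurable measurableSet_Icc hlaw).mono
        fun ω hω => by rw [Real.norm_eq_abs, abs_le]; constructor <;> linarith [hω.1, hω.2]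
  have hcdf : μ.real {ω | mt ω < 1/16 + ε} ≤ 1/8 := by
    have hsub : μ {ω | mt ω < 1/16 + ε} ≤ μ.map mt (Iic (1/8)) := by
      rw [Measure.map_apply hmt measurableSet_Iic]
      exact measure_mono fun ω (hω : mt ω < 1/16 + ε) => show mt ω ≤ 1/8 by linarith
    refine ENNReal.toReal_le_of_le_ofReal (by norm_num) (hsub.trans ?_)
    rw [hlaw]
    exact normalizedDensityMeasure_Iic_le_of_monotoneOn
      ((monotoneOn_inv_cosh_sub_one_div h).mono Icc_subset_Iic_self)
      (inv_nonneg.2 (Real.cosh_pos _).le) (by norm_num) (by norm_num)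
  have hφ := le_integral_abs_sub_sub_integral_abs_sub hmt hmt_int
    (show (1/16 : ℝ) ≤ 1/16 + ε by linarith)
  have hψ := integral_abs_sub_sub_integral_abs_sub_le (μ := μ) (X := fun ω => mt ω ^ 2 + sg ω)
    (by fun_prop) ((1/16 + ε) ^ 2) ((1/16) ^ 2)
  rw [abs_of_nonneg (by nlinarith)] at hψ
  nlinarith [mul_le_mul_of_nonneg_left hcdf hε0.le]

/-- Gap in the two-point family: `m̃` has density proportional to `t ↦ sech((t−1)/h)`
on `[0,1]`, `σ̃²` is independent with density proportional to `t ↦ sech(t/h)` on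
`[0,1/4]`, `W = m̃² + σ̃²`, and `Φ(p) = E|p − m̃| + E|p² − W|`.  Then for `p₀ = 1/16`
and `0 < ε ≤ 1/16`, with `p₁ = p₀ + ε`, one has `Φ(p₀) − Φ(p₁) ≥ (9/16)ε ≥ ε/2`. -/
theorem two_point_gap
    {Ω : Type*} [MeasurableSpace Ω] (μ : Measure Ω) [IsProbabilityMeasure μ]
    (h : ℝ) (hh : 0 < h)
    (mt sg : Ω → ℝ) (hmt : Measurable mt) (hsg : Measurable sg)
    (hindep : IndepFun mt sg μ)
    (hlaw1 : Measure.map mt μ =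
      (ENNReal.ofReal (∫ t in Set.Icc (0:ℝ) 1, (Real.cosh ((t - 1) / h))⁻¹))⁻¹ •
        ((volume.restrict (Set.Icc (0:ℝ) 1)).withDensity
          fun t => ENNReal.ofReal ((Real.cosh ((t - 1) / h))⁻¹)))
    (hlaw2 : Measure.map sg μ =
      (ENNReal.ofReal (∫ t in Set.Icc (0:ℝ) (1/4), (Real.cosh (t / h))⁻¹))⁻¹ •
        ((volume.restrict (Set.Icc (0:ℝ) (1/4))).withDensity
          fun t => ENNReal.ofReal ((Real.cosh (t / h))⁻¹)))
    (ε : ℝ) (hε0 : 0 < ε) (hε : ε ≤ 1/16) :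
    (9/16) * ε ≤
      ((∫ ω, |(1/16 : ℝ) - mt ω| ∂μ) +
        ∫ ω, |((1/16 : ℝ)) ^ 2 - (mt ω ^ 2 + sg ω)| ∂μ) -
      ((∫ ω, |(1/16 + ε) - mt ω| ∂μ) +
        ∫ ω, |(1/16 + ε) ^ 2 - (mt ω ^ 2 + sg ω)| ∂μ) ∧
    ε / 2 ≤ (9/16) * ε :=
  two_point_gap_general μ h mt sg hmt hsg hlaw1 ε hε0 hε
end
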